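/- Let M and L be closed subspaces of a Hilbert space H, let P_L denote the orthogonal projection of H onto L, and let R ⊆ M be a subspace that is dense in M. (1) If R is an operator range (i.e. R = ran B for some bounded linear operator B from a Hilbert space E to H) and P_L(R) = L, then M ∩ ker P_L = clos(R ∩ ker P_L), where clos denotes topological closure. (2) If L is finite-dimensional, then every dense subspace R of M for which P_L(R) is dense in L satisfies both P_L(R) = L and M ∩ ker P_L = clos(R ∩ ker P_L). -/

import Mathlib

/-!
Vectors of `R ∩ ker P` approximate every `x ∈ clos R ∩ ker P` as soon as `P` restricted to `R`
admits a lift with norm control: if `r ∈ R` is close to `x`, then `P r` is small, and subtracting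
a small `s ∈ R` with `P s = P r` lands in `R ∩ ker P` while staying close to `x`. Such a lift
exists by the open mapping theorem when `R` is an operator range with closed image `P(R) = L`,
and by linear algebra when `P(R)` is finite dimensional (it is then also closed, so a dense
image in a finite-dimensional `L` is all of `L`).
-/

open Filter Topology

section BoundedLift

variable {𝕜 E F : Type*} [NontriviallyNormedField 𝕜]
  [NormedAddCommGroup E] [NormedSpace 𝕜 E] [NormedAddCommGroup F] [NormedSpace 𝕜 F]

def HasBoundedLift (P : E →L[𝕜] F) (R : Submodule 𝕜 E) (C : ℝ) : Prop :=
  ∀ r ∈ R, ∃ s ∈ R, P s = P r ∧ ‖s‖ ≤ C * ‖P r‖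

theorem Submodule.topologicalClosure_inf_ker_of_hasBoundedLift {P : E →L[𝕜] F}
    {R : Submodule 𝕜 E} {C : ℝ} (hlift : HasBoundedLift P R C) :
    (R ⊓ LinearMap.ker (P : E →ₗ[𝕜] F)).topologicalClosure =
      R.topologicalClosure ⊓ LinearMap.ker (P : E →ₗ[𝕜] F) := by
  refine le_antisymm ?_ ?_
  · refine Submodule.topologicalClosure_minimal _
      (inf_le_inf_right _ R.le_topologicalClosure) ?_
    exact R.isClosed_topologicalClosure.inter P.isClosed_ker
  · rintro x ⟨hxR, hPx : P x = 0⟩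
    obtain ⟨r, hrR, hrx⟩ := mem_closure_iff_seq_limit.mp hxR
    choose s hsR hPs hs using fun n => hlift (r n) (hrR n)
    have hPr : Tendsto (fun n => C * ‖P (r n)‖) atTop (𝓝 0) := by
      simpa [hPx] using ((P.continuous.tendsto x).comp hrx).norm.const_mul C
    have hs0 : Tendsto s atTop (𝓝 0) := squeeze_zero_norm hs hPr
    refine mem_closure_of_tendsto (by simpa using hrx.sub hs0) (Eventually.of_forall fun n => ?_)
    exact ⟨R.sub_mem (hrR n) (hsR n), by simp [hPs n]⟩

theorem ContinuousLinearMap.hasBoundedLift_range {G : Type*} [NormedAddCommGroup G]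
    [NormedSpace 𝕜 G] [CompleteSpace G] [CompleteSpace F] (B : G →L[𝕜] E) (P : E →L[𝕜] F)
    (hclosed : IsClosed ((LinearMap.range (B : G →ₗ[𝕜] E)).map (P : E →ₗ[𝕜] F) : Set F)) :
    ∃ C, HasBoundedLift P (LinearMap.range (B : G →ₗ[𝕜] E)) C := by
  set L := (LinearMap.range (B : G →ₗ[𝕜] E)).map (P : E →ₗ[𝕜] F)
  have : CompleteSpace L := hclosed.completeSpace_coe
  let f : G →L[𝕜] L := (P.comp B).codRestrict L fun e => ⟨B e, ⟨e, rfl⟩, rfl⟩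
  have hf : Function.Surjective f := by
    rintro ⟨_, _, ⟨e, rfl⟩, rfl⟩
    exact ⟨e, rfl⟩
  obtain ⟨C, -, hC⟩ := f.exists_preimage_norm_le hf
  refine ⟨‖B‖ * C, ?_⟩
  rintro _ ⟨e₀, rfl⟩
  obtain ⟨e, hfe, he⟩ := hC (f e₀)
  refine ⟨B e, ⟨e, rfl⟩, congrArg Subtype.val hfe, ?_⟩
  calc ‖B e‖ ≤ ‖B‖ * ‖e‖ := B.le_opNorm e
    _ ≤ ‖B‖ * (C * ‖P (B e₀)‖) := by gcongr; exact he
    _ = ‖B‖ * C * ‖P (B e₀)‖ := by ring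

theorem ContinuousLinearMap.hasBoundedLift_of_finiteDimensional_map [CompleteSpace 𝕜]
    (P : E →L[𝕜] F) (R : Submodule 𝕜 E) [FiniteDimensional 𝕜 (R.map (P : E →ₗ[𝕜] F))] :
    ∃ C, HasBoundedLift P R C := by
  obtain ⟨g, hg⟩ := ((P : E →ₗ[𝕜] F).submoduleMap R).exists_rightInverse_of_surjective
    (LinearMap.range_eq_top.mpr (LinearMap.submoduleMap_surjective _ R))
  let g' := LinearMap.toContinuousLinearMap g
  refine ⟨‖g'‖, fun r hr => ⟨g' ⟨P r, r, hr, rfl⟩, (g _).2, ?_, g'.le_opNorm _⟩⟩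
  exact congrArg Subtype.val (LinearMap.congr_fun hg ⟨P r, r, hr, rfl⟩)

end BoundedLift

theorem denseness_in_kernel_of_projection_general
    {H : Type*} [NormedAddCommGroup H] [InnerProductSpace ℂ H] [CompleteSpace H]
    (M L : Submodule ℂ H) (hL : IsClosed (L : Set H))
    (P : H →L[ℂ] H) (hP : ∀ x, P x ∈ L ∧ x - P x ∈ Lᗮ) :
    (∀ R : Submodule ℂ H, R ≤ M → R.topologicalClosure = M →
      (∃ (E : Type) (_ : NormedAddCommGroup E) (_ : InnerProductSpace ℂ E)
          (_ : CompleteSpace E) (B : E →L[ℂ] H), LinearMap.range (B : E →ₗ[ℂ] H) = R) →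
      R.map (P : H →ₗ[ℂ] H) = L →
      M ⊓ LinearMap.ker (P : H →ₗ[ℂ] H) = (R ⊓ LinearMap.ker (P : H →ₗ[ℂ] H)).topologicalClosure) ∧
    (FiniteDimensional ℂ L →
      ∀ R : Submodule ℂ H, R ≤ M → R.topologicalClosure = M →
        (R.map (P : H →ₗ[ℂ] H)).topologicalClosure = L →
        R.map (P : H →ₗ[ℂ] H) = L ∧
          M ⊓ LinearMap.ker (P : H →ₗ[ℂ] H) = (R ⊓ LinearMap.ker (P : H →ₗ[ℂ] H)).topologicalClosure) := by
  refine ⟨?_, fun hfin R _ hdense hdmap => ?_⟩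
  · rintro R _ hdense ⟨E, _, _, _, B, rfl⟩ hmap
    obtain ⟨C, hC⟩ := B.hasBoundedLift_range P (hmap ▸ hL)
    rw [Submodule.topologicalClosure_inf_ker_of_hasBoundedLift hC, hdense]
  · have hmapL : R.map (P : H →ₗ[ℂ] H) ≤ L :=
      Submodule.map_le_iff_le_comap.mpr fun x _ => (hP x).1
    have := Submodule.finiteDimensional_of_le hmapL
    have hmap : R.map (P : H →ₗ[ℂ] H) = L := by
      rw [← hdmap, (Submodule.closed_of_finiteDimensional _).submodule_topologicalClosure_eq]
    obtain ⟨C, hC⟩ := P.hasBoundedLift_of_finiteDimensional_map R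
    rw [Submodule.topologicalClosure_inf_ker_of_hasBoundedLift hC, hdense]
    exact ⟨hmap, rfl⟩

/-- Lemma 2.2 (denseness result): for closed subspaces `M`, `L` of a Hilbert space `H`
with orthogonal projection `P` onto `L`, and a subspace `R ⊆ M` dense in `M`:
(1) if `R` is an operator range and `P(R) = L`, then `M ∩ ker P = clos (R ∩ ker P)`;
(2) if `L` is finite dimensional, any such dense `R` with `P(R)` dense in `L` satisfies
both `P(R) = L` and `M ∩ ker P = clos (R ∩ ker P)`. -/
theorem denseness_in_kernel_of_projection
    {H : Type*} [NormedAddCommGroup H] [InnerProductSpace ℂ H] [CompleteSpace H]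
    (M L : Submodule ℂ H) (hM : IsClosed (M : Set H)) (hL : IsClosed (L : Set H))
    (P : H →L[ℂ] H) (hP : ∀ x, P x ∈ L ∧ x - P x ∈ Lᗮ) :
    (∀ R : Submodule ℂ H, R ≤ M → R.topologicalClosure = M →
      (∃ (E : Type) (_ : NormedAddCommGroup E) (_ : InnerProductSpace ℂ E)
          (_ : CompleteSpace E) (B : E →L[ℂ] H), LinearMap.range (B : E →ₗ[ℂ] H) = R) →
      R.map (P : H →ₗ[ℂ] H) = L →
      M ⊓ LinearMap.ker (P : H →ₗ[ℂ] H) = (R ⊓ LinearMap.ker (P : H →ₗ[ℂ] H)).topologicalClosure) ∧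
    (FiniteDimensional ℂ L →
      ∀ R : Submodule ℂ H, R ≤ M → R.topologicalClosure = M →
        (R.map (P : H →ₗ[ℂ] H)).topologicalClosure = L →
        R.map (P : H →ₗ[ℂ] H) = L ∧
          M ⊓ LinearMap.ker (P : H →ₗ[ℂ] H) = (R ⊓ LinearMap.ker (P : H →ₗ[ℂ] H)).topologicalClosure) :=
  denseness_in_kernel_of_projection_general M L hL P hP
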